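/- Bang makes writable read-only: if u | μ : v : τ [ro: r, rw: w] then u | μ : v : bang(τ) [ro: r ∪ w, rw: ∅]. -/

import Mathlib

/-- Permissions: Discardable, Shareable, Escapable. -/
inductive Perm | D | S | E
deriving DecidableEq

/-- Kinds are sets of permissions. -/
abbrev Kind := Set Perm

/-- Storage modes. -/
inductive Mode | readOnly | writable | unboxed

/-- The kind of a mode. -/
def kindOf : Mode → Kind
  | .readOnly => {Perm.D, Perm.S}
  | .writable => {Perm.E}
  | .unboxed  => {Perm.D, Perm.S, Perm.E}

/-- (Closed) types: unit, primitives, and records with possibly-taken fields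
    (`true` = taken) and a storage mode. -/
inductive Ty
  | unit
  | prim
  | record (fs : List (Ty × Bool)) (m : Mode)

/-- The kinding judgement for closed types. -/
inductive Kinding : Ty → Kind → Prop
  | unit : Kinding .unit κ
  | prim : Kinding .prim κ
  | record : κ ⊆ kindOf m → (∀ p ∈ fs, p.2 = false → Kinding p.1 κ) →
      Kinding (.record fs m) κ

abbrev Ptr := ℕ

/-- Update-semantics values: literals, unit, records, and pointers. -/
inductive UVal
  | lit (n : ℕ)
  | unit
  | rcd (us : List UVal)
  | ptr (p : Ptr)

/-- Value-semantics values: literals, unit, and records. -/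
inductive VVal
  | lit (n : ℕ)
  | unit
  | rcd (vs : List VVal)

/-- Mutable stores: partial maps from pointers to update-semantics values. -/
abbrev Store := Ptr → Option UVal

mutual
/-- The correspondence relation `u | μ : v : τ [ro: r, rw: w]` between an
    update-semantics value (with store) and a value-semantics value at type τ,
    collecting read-only pointers r and writable pointers w reachable from u. -/
inductive Corr : UVal → Store → VVal → Ty → Set Ptr → Set Ptr → Prop
  | lit : Corr (.lit n) μ (.lit n) .prim ∅ ∅
  | unit : Corr .unit μ .unit .unit ∅ ∅
  | recU : CorrFields us μ vs fs r w →
      Corr (.rcd us) μ (.rcd vs) (.record fs .unboxed) r w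
  | recW : μ p = some (.rcd us) → CorrFields us μ vs fs r w →
      Corr (.ptr p) μ (.rcd vs) (.record fs .writable) r ({p} ∪ w)
  | recR : μ p = some (.rcd us) → CorrFields us μ vs fs r ∅ →
      Corr (.ptr p) μ (.rcd vs) (.record fs .readOnly) ({p} ∪ r) ∅

/-- Field-wise correspondence, with non-aliasing of writable pointers;
    taken fields are skipped. -/
inductive CorrFields : List UVal → Store → List VVal → List (Ty × Bool) → Set Ptr → Set Ptr → Prop
  | nil : CorrFields [] μ [] [] ∅ ∅
  | cons : Corr u μ v τ r w → CorrFields us μ vs fs r' w' →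
      w ∩ (r' ∪ w') = ∅ → w' ∩ (r ∪ w) = ∅ →
      CorrFields (u :: us) μ (v :: vs) ((τ, false) :: fs) (r ∪ r') (w ∪ w')
  | taken : CorrFields us μ vs fs r w →
      CorrFields (u :: us) μ (v :: vs) ((τ, true) :: fs) r w
end

/-- Typing contexts (entries may be absent). -/
abbrev Ctx := List (Option Ty)

/-- Environment correspondence `U | μ : V : Γ [ro: r, rw: w]`, with
    non-aliasing of writable pointers between distinct bindings. -/
inductive EnvCorr : List UVal → Store → List VVal → Ctx → Set Ptr → Set Ptr → Prop
  | nil : EnvCorr [] μ [] [] ∅ ∅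
  | consSome : Corr u μ v τ r w → EnvCorr U μ V Γ r' w' →
      w ∩ (r' ∪ w') = ∅ → w' ∩ (r ∪ w) = ∅ →
      EnvCorr (u :: U) μ (v :: V) (some τ :: Γ) (r ∪ r') (w ∪ w')
  | consNone : EnvCorr U μ V Γ r w →
      EnvCorr (u :: U) μ (v :: V) (none :: Γ) r w

/-- bang on modes: writable becomes read-only. -/
def bangMode : Mode → Mode
  | .readOnly => .readOnly
  | .writable => .readOnly
  | .unboxed  => .unboxed

/-- bang on types: converts all writable modes to read-only, homomorphically. -/
def bangTy : Ty → Ty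
  | .unit => .unit
  | .prim => .prim
  | .record fs m => .record (fs.attach.map (fun p => (bangTy p.1.1, p.1.2))) (bangMode m)
  decreasing_by
  · simp only [Ty.record.sizeOf_spec]
    have := List.sizeOf_lt_of_mem p.2
    cases hp : p.1 with | mk a b => rw [hp] at this; simp at this ⊢; omega

theorem bangTy_record (fs : List (Ty × Bool)) (m : Mode) :
    bangTy (.record fs m) = .record (fs.map fun p => (bangTy p.1, p.2)) (bangMode m) := by
  rw [bangTy, List.attach_map_val (l := fs) (f := fun p => (bangTy p.1, p.2))]

mutual

theorem corrFields_bang {us : List UVal} {μ : Store} {vs : List VVal} {fs : List (Ty × Bool)}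
    {r w : Set Ptr} (h : CorrFields us μ vs fs r w) :
    CorrFields us μ vs (fs.map fun p => (bangTy p.1, p.2)) (r ∪ w) ∅ :=
  match h with
  | .nil => by simpa using CorrFields.nil
  | .cons hu hus _ _ => by
    rw [Set.union_union_union_comm, ← Set.union_empty ∅]
    exact .cons (corr_bang hu) (corrFields_bang hus) (Set.empty_inter _) (Set.empty_inter _)
  | .taken hus => .taken (corrFields_bang hus)

/-- bang makes writable read-only: all pointers become read-only and the
    writable pointer set becomes empty. -/
theorem corr_bang {u : UVal} {μ : Store} {v : VVal} {τ : Ty} {r w : Set Ptr}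
    (h : Corr u μ v τ r w) : Corr u μ v (bangTy τ) (r ∪ w) ∅ :=
  match h with
  | .lit => by simpa [bangTy] using Corr.lit
  | .unit => by simpa [bangTy] using Corr.unit
  | .recU hus => by
    rw [bangTy_record]
    exact .recU (corrFields_bang hus)
  | .recW hp hus => by
    rw [bangTy_record, Set.union_left_comm]
    exact .recR hp (corrFields_bang hus)
  | .recR hp hus => by
    rw [bangTy_record, Set.union_empty]
    exact .recR hp (by simpa using corrFields_bang hus)

end
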